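/- Let n ≥ 2, let v be a vertex of the complete graph K_n, and let B = L_{K_n}(v) be the (n−1)×(n−1) principal submatrix of the Laplacian of K_n obtained by deleting row and column v. Then per(B ∘ B) ≤ per(B)². -/

import Mathlib

open Matrix Finset Equiv

set_option maxHeartbeats 1600000

/-- The Laplacian matrix of a simple graph, with real entries. -/
noncomputable def lap {V : Type*} [Fintype V] [DecidableEq V] (G : SimpleGraph V) :
    Matrix V V ℝ :=
  letI := Classical.decRel G.Adj
  G.lapMatrix ℝ

/-- The principal submatrix of `A` obtained by deleting row and column `v`. -/
def del {V : Type*} (A : Matrix V V ℝ) (v : V) :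
    Matrix {x : V // x ≠ v} {x : V // x ≠ v} ℝ :=
  A.submatrix Subtype.val Subtype.val

section Counting

variable {α : Type*} [Fintype α] [DecidableEq α]

lemma card_fixing (S : Finset α) :
    (univ.filter fun σ : Equiv.Perm α => ∀ i ∈ S, σ i = i).card
      = Nat.factorial (Fintype.card α - S.card) := by
  classical
  rw [← Fintype.card_subtype]
  have e1 : {σ : Equiv.Perm α // ∀ i ∈ S, σ i = i}
      ≃ {σ : Equiv.Perm α // ∀ a, ¬ (a ∉ S) → σ a = a} :=
    Equiv.subtypeEquivRight (fun σ => by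
      constructor
      · exact fun h a ha => h a (not_not.mp ha)
      · exact fun h a ha => h a (not_not.mpr ha))
  have e2 := (Equiv.Perm.subtypeEquivSubtypePerm (fun a : α => a ∉ S)).symm
  rw [Fintype.card_congr (e1.trans e2), Fintype.card_perm]
  congr 1
  have : Fintype.card {a : α // a ∈ S} = S.card := Fintype.card_coe S
  rw [Fintype.card_subtype_compl, this]

lemma sum_choose_fix (k : ℕ) :
    (∑ σ : Equiv.Perm α, ((univ.filter fun i => σ i = i).card).choose k)
      = (Fintype.card α).choose k * Nat.factorial (Fintype.card α - k) := by
  classical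
  have h1 : ∀ σ : Equiv.Perm α, ((univ.filter fun i => σ i = i).card).choose k
      = ∑ S ∈ powersetCard k (univ : Finset α), if (∀ i ∈ S, σ i = i) then 1 else 0 := by
    intro σ
    rw [← Finset.card_powersetCard]
    have : powersetCard k (univ.filter fun i => σ i = i)
        = (powersetCard k (univ : Finset α)).filter (fun S => ∀ i ∈ S, σ i = i) := by
      ext S
      simp only [Finset.mem_powersetCard, Finset.mem_filter, Finset.subset_iff,
        Finset.mem_filter, Finset.mem_univ, true_and]
      tauto
    rw [this, Finset.card_filter]
  rw [Finset.sum_congr rfl fun σ _ => h1 σ, Finset.sum_comm]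
  have h2 : ∀ S ∈ powersetCard k (univ : Finset α),
      (∑ σ : Equiv.Perm α, if (∀ i ∈ S, σ i = i) then 1 else 0)
        = Nat.factorial (Fintype.card α - k) := by
    intro S hS
    rw [← Finset.card_filter, card_fixing]
    congr 2
    exact (Finset.mem_powersetCard.mp hS).2
  rw [Finset.sum_congr rfl h2, Finset.sum_const, Finset.card_powersetCard,
    Finset.card_univ, smul_eq_mul]

lemma permanent_ite (a c : ℝ) (M : Matrix α α ℝ)
    (hM : ∀ i j, M i j = if i = j then a else c) :
    M.permanent = ∑ k ∈ range (Fintype.card α + 1),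
      ((Fintype.card α).choose k * Nat.factorial (Fintype.card α - k) : ℕ)
        * (a - c)^k * c^(Fintype.card α - k) := by
  classical
  set m := Fintype.card α with hm
  rw [Matrix.permanent]
  have key : ∀ σ : Equiv.Perm α, (∏ i, M (σ i) i)
      = ∑ k ∈ range (m+1),
          ((((univ.filter fun i => σ i = i).card.choose k : ℕ)) : ℝ) * ((a-c)^k * c^(m-k)) := by
    intro σ
    have h0 : ∀ i ∈ univ, M (σ i) i = if σ i = i then a else c := fun i _ => hM _ _
    rw [Finset.prod_congr rfl h0, Finset.prod_ite, Finset.prod_const, Finset.prod_const]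
    set F := (univ.filter fun i => σ i = i).card with hF
    have hFle : F ≤ m := by
      rw [hF, hm, ← Finset.card_univ]
      exact Finset.card_filter_le _ _
    have hF2 : (univ.filter fun i => ¬ σ i = i).card = m - F := by
      have h := Finset.card_filter_add_card_filter_not (s := (univ : Finset α))
        (p := fun i => σ i = i)
      simp only [Finset.card_univ] at h
      omega
    rw [hF2]
    have expand : a ^ F = ∑ k ∈ range (F+1), (a-c)^k * c^(F-k) * (F.choose k : ℝ) := by
      conv_lhs => rw [show a = (a - c) + c by ring]
      exact add_pow (a-c) c F
    rw [expand, Finset.sum_mul]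
    have step1 : ∀ k ∈ range (F+1), (a-c)^k * c^(F-k) * (F.choose k : ℝ) * c^(m-F)
        = (F.choose k : ℝ) * ((a-c)^k * c^(m-k)) := by
      intro k hk
      have hk' : k ≤ F := by simpa [Nat.lt_succ_iff] using hk
      have hpow : c^(F-k) * c^(m-F) = c^(m-k) := by
        rw [← pow_add, show F-k+(m-F) = m-k by omega]
      calc (a-c)^k * c^(F-k) * (F.choose k : ℝ) * c^(m-F)
          = (F.choose k : ℝ) * ((a-c)^k * (c^(F-k) * c^(m-F))) := by ring
        _ = _ := by rw [hpow]
    rw [Finset.sum_congr rfl step1]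
    refine Finset.sum_subset (Finset.range_subset_range.mpr (by omega)) ?_
    intro k _ hk2
    have : F.choose k = 0 := Nat.choose_eq_zero_of_lt (by
      simp only [Finset.mem_range] at hk2; omega)
    simp [this]
  rw [Finset.sum_congr rfl fun σ _ => key σ, Finset.sum_comm]
  refine Finset.sum_congr rfl fun k _ => ?_
  rw [← Finset.sum_mul, ← Nat.cast_sum, sum_choose_fix k, ← hm]
  push_cast
  ring

end Counting

lemma polyAB (a b : ℝ) (ha : 0 ≤ a) (hb : 0 ≤ b) (hab : 11 ≤ a + b) :
    0 ≤ 6*a^3 + 2*a^3*b + 28*a^2 + 8*a^2*b + 31*a - 8*a*b - 7*a*b^2 + b^4 + 2*b^3 - 14*b^2 - 34*b - 3 := by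
  nlinarith [mul_nonneg ha hb, mul_nonneg (mul_nonneg ha hb) hb, mul_nonneg (mul_nonneg ha ha) hb, sq_nonneg (b^2-7*a), sq_nonneg (a-b), mul_nonneg (mul_nonneg hb hb) (by linarith : (0:ℝ) ≤ a+b-11), mul_nonneg (mul_nonneg ha ha) (by linarith : (0:ℝ) ≤ a+b-11), mul_nonneg (mul_nonneg ha hb) (by linarith : (0:ℝ) ≤ a+b-11), mul_nonneg ha (by linarith : (0:ℝ) ≤ a+b-11), mul_nonneg hb (by linarith : (0:ℝ) ≤ a+b-11)]

lemma polyXK (X K : ℝ) (h14 : 14 ≤ X) (hK2 : 2 ≤ K) (hK : K ≤ X - 1) :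
    6*X^2*K*(X-K) ≤ (X^2-K^2+K)*(X+K-2)*(X+K) := by
  have h := polyAB (K-2) (X-1-K) (by linarith) (by linarith) (by linarith)
  nlinarith [h]

lemma onePlusPow (y : ℝ) (hy : 0 ≤ y) : ∀ j : ℕ,
    1 + (j:ℝ)*y + (j:ℝ)*((j:ℝ)-1)/2 * y^2 ≤ (1+y)^j := by
  intro j
  induction j with
  | zero => norm_num
  | succ j ih =>
    have h1 : (1+y)^(j+1) = (1+y)^j * (1+y) := by ring
    have h2 : (1 + (j:ℝ)*y + (j:ℝ)*((j:ℝ)-1)/2 * y^2) * (1+y) ≤ (1+y)^j * (1+y) := by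
      apply mul_le_mul_of_nonneg_right ih (by linarith)
    have hj : (0:ℝ) ≤ (j:ℝ)*((j:ℝ)-1) := by
      rcases Nat.eq_zero_or_pos j with h | h
      · simp [h]
      · have : (1:ℝ) ≤ (j:ℝ) := by exact_mod_cast h
        nlinarith
    have h3 : 0 ≤ (j:ℝ)*((j:ℝ)-1)/2 * (y^2*y) := by positivity
    push_cast
    nlinarith [h2, h3]

noncomputable def Tf (n : ℕ) (j : ℕ) : ℝ :=
  ∑ k ∈ range (j+1), (j.descFactorial (j-k) : ℝ) * (-(n:ℝ))^k

lemma Tf_zero (n : ℕ) : Tf n 0 = 1 := by simp [Tf]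

lemma Tf_succ (n j : ℕ) : Tf n (j+1) = ((j:ℝ)+1) * Tf n j + (-(n:ℝ))^(j+1) := by
  rw [Tf, Finset.sum_range_succ]
  have h1 : ((j+1).descFactorial (j+1-(j+1)) : ℝ) = 1 := by simp
  rw [h1, one_mul]
  congr 1
  rw [Tf, Finset.mul_sum]
  refine Finset.sum_congr rfl fun k hk => ?_
  have hk' : k ≤ j := by simpa [Nat.lt_succ_iff] using hk
  have h2 : (j+1) - k = (j-k) + 1 := by omega
  rw [h2, Nat.succ_descFactorial_succ]
  push_cast
  ring

noncomputable def rr (n : ℕ) (k : ℕ) : ℝ := ((-1)^k * Tf n k) / (n:ℝ)^k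

lemma rr_zero (n : ℕ) : rr n 0 = 1 := by simp [rr, Tf_zero]

lemma rr_succ (n : ℕ) (hn : 0 < n) (k : ℕ) :
    rr n (k+1) = 1 - (((k:ℝ)+1)/(n:ℝ)) * rr n k := by
  have hX : (0:ℝ) < (n:ℝ) := by exact_mod_cast hn
  have hXk : (0:ℝ) < (n:ℝ)^k := by positivity
  rw [rr, rr, Tf_succ]
  have h1 : (-1:ℝ)^(k+1) * (-(n:ℝ))^(k+1) = (n:ℝ)^(k+1) := by
    rw [← mul_pow]; norm_num
  field_simp
  ring_nf
  rw [show ((-1:ℝ)^(k*2)) = ((-1:ℝ)^2)^k by rw [← pow_mul, Nat.mul_comm]]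
  norm_num

lemma rr_band (n : ℕ) (hn : 14 ≤ n) :
    ∀ k, k ≤ n - 1 → |rr n k - (n:ℝ)/((n:ℝ)+(k:ℝ))| ≤ 1/(6*(n:ℝ)) := by
  have hn0 : 0 < n := by omega
  have hX : (14:ℝ) ≤ (n:ℝ) := by exact_mod_cast hn
  have hX0 : (0:ℝ) < (n:ℝ) := by linarith
  intro k
  induction k using Nat.strong_induction_on with
  | _ k ih =>
    match k with
    | 0 =>
      intro _
      simp [rr_zero, div_self (ne_of_gt hX0)]
    | 1 =>
      intro _
      have h1 : rr n 1 = 1 - 1/(n:ℝ) := by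
        rw [show (1:ℕ) = 0 + 1 from rfl, rr_succ n hn0 0, rr_zero]
        norm_num
      have h2 : rr n 1 - (n:ℝ)/((n:ℝ)+1) = -(1/((n:ℝ)*((n:ℝ)+1))) := by
        rw [h1]; field_simp; ring
      rw [show ((1:ℕ):ℝ) = (1:ℝ) by norm_num, h2, abs_neg, abs_of_pos (by positivity)]
      rw [div_le_div_iff₀ (by positivity) (by positivity)]
      nlinarith
    | (j+2) =>
      intro hk
      have hjle : j ≤ n - 1 := by omega
      have hIH := ih j (by omega) (by omega)
      set X := (n:ℝ) with hXdef
      set J := (j:ℝ) with hJdef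
      have hJ0 : 0 ≤ J := Nat.cast_nonneg j
      have hJX : J + 2 ≤ X - 1 := by
        have : ((j+2:ℕ):ℝ) ≤ ((n-1:ℕ):ℝ) := by exact_mod_cast hk
        rw [Nat.cast_sub (by omega)] at this
        push_cast at this
        linarith
      have hd1 : (0:ℝ) < X + J := by linarith
      have hd2 : (0:ℝ) < X + J + 2 := by linarith
      -- recurrences
      have h1 : rr n (j+1) = 1 - ((J+1)/X) * rr n j := by
        rw [rr_succ n hn0 j]
      have h2 : rr n (j+2) = 1 - ((J+2)/X) * rr n (j+1) := by
        rw [show j+2 = (j+1)+1 from rfl, rr_succ n hn0 (j+1)]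
        push_cast
        ring_nf
        rw [hXdef, hJdef]; ring
      -- key identity
      have key : rr n (j+2) - X/(X+((j:ℝ)+2))
          = ((J+2)*(J+1)/X^2) * (rr n j - X/(X+J))
            - (J+2)*(X-(J+2))/(X*(X+J)*(X+J+2)) := by
        rw [h2, h1]
        rw [show X + ((j:ℝ)+2) = X + J + 2 by ring]
        field_simp
        ring
      push_cast
      rw [key]
      have hlam : (0:ℝ) ≤ (J+2)*(J+1)/X^2 := by positivity
      have hDel : (0:ℝ) ≤ (J+2)*(X-(J+2))/(X*(X+J)*(X+J+2)) := by
        apply div_nonneg (by nlinarith) (by positivity)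
      have habs : |((J+2)*(J+1)/X^2) * (rr n j - X/(X+J))
            - (J+2)*(X-(J+2))/(X*(X+J)*(X+J+2))|
          ≤ ((J+2)*(J+1)/X^2) * (1/(6*X)) + (J+2)*(X-(J+2))/(X*(X+J)*(X+J+2)) := by
        refine (abs_sub _ _).trans ?_
        gcongr
        · rw [abs_mul, abs_of_nonneg hlam]
          exact mul_le_mul_of_nonneg_left hIH hlam
        · rw [abs_of_nonneg hDel]
      refine habs.trans ?_
      -- final: λ/(6X) + Δ ≤ 1/(6X)
      have hpoly := polyXK X (J+2) hX (by linarith) hJX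
      have hfin : (J+2)*(X-(J+2))/(X*(X+J)*(X+J+2))
          ≤ (1 - (J+2)*(J+1)/X^2) * (1/(6*X)) := by
        rw [div_le_iff₀ (by positivity)]
        have e1 : (1 - (J+2)*(J+1)/X^2) * (1/(6*X)) * (X*(X+J)*(X+J+2))
            = (X^2 - (J+2)^2 + (J+2)) * ((X+(J+2))-2) * (X+(J+2)) / (6*X^3) * X := by
          field_simp
          ring
        rw [e1, div_mul_eq_mul_div, le_div_iff₀ (by positivity)]
        nlinarith [mul_le_mul_of_nonneg_right hpoly (le_of_lt hX0)]
      nlinarith [hfin]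

lemma scalar_ineq (n : ℕ) (hn : 2 ≤ n) :
    (∑ k ∈ range n, ((n-1).descFactorial (n-1-k) : ℝ) * ((n:ℝ)^2 - 2*(n:ℝ))^k)
      ≤ (∑ k ∈ range n, ((n-1).descFactorial (n-1-k) : ℝ) * (n:ℝ)^k * (-1:ℝ)^(n-1-k))^2 := by
  rcases le_or_gt n 13 with hsmall | hlarge
  · interval_cases n <;> norm_num [Finset.sum_range_succ, Nat.descFactorial]
  · have hn14 : 14 ≤ n := hlarge
    have hX : (14:ℝ) ≤ (n:ℝ) := by exact_mod_cast hn14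
    have hX0 : (0:ℝ) < (n:ℝ) := by linarith
    set X := (n:ℝ) with hXdef
    set M : ℝ := ((n-1:ℕ):ℝ) with hMdef
    have hM : M = X - 1 := by
      rw [hMdef, Nat.cast_sub (by omega)]; norm_num; rfl
    set u : ℝ := X^2 - 2*X with hudef
    have hu0 : (0:ℝ) < u := by nlinarith
    have huM : (0:ℝ) < u - M := by rw [hM]; nlinarith
    have hm1 : n - 1 + 1 = n := by omega
    -- RHS = (Tf n (n-1))^2
    have hR : (∑ k ∈ range n, ((n-1).descFactorial (n-1-k) : ℝ) * X^k * (-1:ℝ)^(n-1-k))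
        = (-1:ℝ)^(n-1) * Tf n (n-1) := by
      rw [Tf, hm1, Finset.mul_sum]
      refine Finset.sum_congr rfl fun k hk => ?_
      have hk' : k ≤ n-1 := by
        simp only [Finset.mem_range] at hk; omega
      have hsq : (-1:ℝ)^k * (-1:ℝ)^k = 1 := by
        rw [← pow_add, show k+k = 2*k by ring, pow_mul]; norm_num
      have hsign : (-1:ℝ)^(n-1-k) * (-1:ℝ)^k = (-1:ℝ)^(n-1) := by
        rw [← pow_add, show n-1-k+k = n-1 by omega]
      have h2 : (-1:ℝ)^(n-1-k) = (-1:ℝ)^(n-1) * (-1:ℝ)^k := by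
        rw [← hsign, mul_assoc, hsq, mul_one]
      rw [h2, neg_pow (X) k]
      push_cast
      ring
    rw [hR, mul_pow, ← pow_mul, mul_comm (n-1) 2, pow_mul]
    norm_num
    -- now RHS is (Tf n (n-1))^2
    -- lower bound on Tf²
    have hband := rr_band n hn14 (n-1) le_rfl
    have hcast : ((n-1:ℕ):ℝ) = X - 1 := hM
    rw [hcast] at hband
    have hrr : (1:ℝ)/2 ≤ rr n (n-1) := by
      have h1 : X/(X+(X-1)) - 1/(6*X) ≤ rr n (n-1) := by
        have := abs_le.mp hband
        linarith [this.1]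
      have h2 : (1:ℝ)/2 ≤ X/(X+(X-1)) - 1/(6*X) := by
        rw [div_sub_div _ _ (by linarith : X+(X-1) ≠ 0) (by positivity : (6:ℝ)*X ≠ 0),
          le_div_iff₀ (by nlinarith)]
        nlinarith
      linarith
    have hXm0 : (0:ℝ) < X^(n-1) := by positivity
    have hTf : X^(n-1)/2 ≤ (-1:ℝ)^(n-1) * Tf n (n-1) := by
      have : rr n (n-1) * X^(n-1) = (-1:ℝ)^(n-1) * Tf n (n-1) := by
        rw [rr, div_mul_cancel₀]
        positivity
      rw [← this]
      rw [div_le_iff₀ (by norm_num : (0:ℝ) < 2)] at hrr ⊢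
      nlinarith [hrr, hXm0]
    have hTfsq : X^(2*(n-1))/4 ≤ (Tf n (n-1))^2 := by
      have h0 : (0:ℝ) ≤ X^(n-1)/2 := by positivity
      have h1 : (X^(n-1)/2)^2 ≤ ((-1:ℝ)^(n-1) * Tf n (n-1))^2 := by
        exact pow_le_pow_left₀ h0 hTf 2
      have h2 : ((-1:ℝ)^(n-1) * Tf n (n-1))^2 = (Tf n (n-1))^2 := by
        rw [mul_pow, ← pow_mul, mul_comm (n-1) 2, pow_mul]; norm_num
      have h3 : (X^(n-1)/2)^2 = X^(2*(n-1))/4 := by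
        rw [div_pow, ← pow_mul, mul_comm (n-1) 2]; norm_num
      rw [← h2, ← h3]; exact h1
    -- upper bound on LHS
    have hL1 : (∑ k ∈ range n, ((n-1).descFactorial (n-1-k) : ℝ) * u^k)
        ≤ ∑ k ∈ range n, u^k * M^(n-1-k) := by
      refine Finset.sum_le_sum fun k _ => ?_
      have hd : ((n-1).descFactorial (n-1-k) : ℝ) ≤ M^(n-1-k) := by
        rw [hMdef, ← Nat.cast_pow]
        exact_mod_cast Nat.descFactorial_le_pow _ _
      calc ((n-1).descFactorial (n-1-k) : ℝ) * u^k ≤ M^(n-1-k) * u^k := by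
            apply mul_le_mul_of_nonneg_right hd (pow_nonneg (le_of_lt hu0) k)
        _ = u^k * M^(n-1-k) := by ring
    have geo := geom_sum₂_mul u M n
    have hL2 : (∑ k ∈ range n, u^k * M^(n-1-k)) ≤ u^n/(u-M) := by
      rw [le_div_iff₀ huM, geo]
      have : (0:ℝ) ≤ M^n := pow_nonneg (by rw [hM]; linarith) n
      linarith
    -- u^n/(u-M) ≤ X^(2(n-1))/4
    have hy : (0:ℝ) ≤ 2*X/u := div_nonneg (by positivity) (le_of_lt hu0)
    have hQ := onePlusPow (2*X/u) hy (n-1)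
    rw [hcast] at hQ
    set Q : ℝ := 1 + (X-1)*(2*X/u) + (X-1)*((X-1)-1)/2*(2*X/u)^2 with hQdef
    have hXu : X^2 = u * (1 + 2*X/u) := by
      field_simp
      rw [hudef]; ring
    have hpow : X^(2*(n-1)) = u^(n-1) * (1+2*X/u)^(n-1) := by
      rw [mul_comm 2 (n-1), pow_mul', hXu, mul_pow]
    have hkey : Q*(u-M)*u^2 - 4*u*u^2 = X^2*(X-2)*(X^3 - 5*X^2 + 7*X - 6) := by
      rw [hQdef, hM, hudef]
      have hu' : X^2 - 2*X ≠ 0 := ne_of_gt hu0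
      have hX2 : X - 2 ≠ 0 := ne_of_gt (by linarith)
      field_simp
      ring
    have hfact : (0:ℝ) ≤ X^2*(X-2)*(X^3 - 5*X^2 + 7*X - 6) := by
      have h1 : (0:ℝ) ≤ X^2*(X-2) := by nlinarith
      have h2 : (0:ℝ) ≤ X^3 - 5*X^2 + 7*X - 6 := by nlinarith
      exact mul_nonneg h1 h2
    have h4u : 4*u ≤ Q*(u-M) := by
      have hu2 : (0:ℝ) < u^2 := by positivity
      nlinarith [hkey, hfact]
    have hfinal : u^n/(u-M) ≤ X^(2*(n-1))/4 := by
      rw [div_le_div_iff₀ huM (by norm_num : (0:ℝ) < 4)]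
      have hun : u^n = u^(n-1) * u := by
        rw [← pow_succ, hm1]
      have hc1 : u^(n-1) * Q ≤ u^(n-1) * (1+2*X/u)^(n-1) := by
        apply mul_le_mul_of_nonneg_left hQ (pow_nonneg (le_of_lt hu0) _)
      have hc2 : u^(n-1) * (4*u) ≤ u^(n-1) * (Q*(u-M)) := by
        apply mul_le_mul_of_nonneg_left h4u (pow_nonneg (le_of_lt hu0) _)
      calc u^n * 4 = u^(n-1) * (4*u) := by rw [hun]; ring
        _ ≤ u^(n-1) * (Q*(u-M)) := hc2
        _ = (u^(n-1) * Q) * (u-M) := by ring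
        _ ≤ (u^(n-1) * (1+2*X/u)^(n-1)) * (u-M) := by
            apply mul_le_mul_of_nonneg_right hc1 (le_of_lt huM)
        _ = X^(2*(n-1)) * (u-M) := by rw [hpow]
    calc (∑ k ∈ range n, ((n-1).descFactorial (n-1-k) : ℝ) * (X^2-2*X)^k)
        = ∑ k ∈ range n, ((n-1).descFactorial (n-1-k) : ℝ) * u^k := by rw [← hudef]
      _ ≤ u^n/(u-M) := hL1.trans hL2
      _ ≤ X^(2*(n-1))/4 := hfinal
      _ ≤ (Tf n (n-1))^2 := hTfsq

lemma coeffEq (m k : ℕ) (h : k ≤ m) :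
    m.choose k * Nat.factorial (m-k) = m.descFactorial (m-k) := by
  have h1 := Nat.choose_mul_factorial_mul_factorial h
  have h2 := Nat.factorial_mul_descFactorial (Nat.sub_le m k)
  rw [show m - (m-k) = k by omega] at h2
  apply Nat.eq_of_mul_eq_mul_right (Nat.factorial_pos k)
  calc m.choose k * Nat.factorial (m-k) * Nat.factorial k
      = m.choose k * Nat.factorial k * Nat.factorial (m-k) := by ring
    _ = Nat.factorial m := h1
    _ = Nat.factorial k * m.descFactorial (m-k) := h2.symm
    _ = m.descFactorial (m-k) * Nat.factorial k := by ring

/-- For `B = L_{K_n}(v)`, the principal submatrix of the Laplacian of the complete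
graph `K_n` (`n ≥ 2`) obtained by deleting vertex `v`, `per(B ∘ B) ≤ per(B)²`. -/
theorem complete_graph_minor_permanent_hadamard_le_sq (n : ℕ) (hn : 2 ≤ n) (v : Fin n) :
    (Matrix.hadamard (del (lap (⊤ : SimpleGraph (Fin n))) v)
        (del (lap (⊤ : SimpleGraph (Fin n))) v)).permanent ≤
      (del (lap (⊤ : SimpleGraph (Fin n))) v).permanent ^ 2 := by
  classical
  set B := del (lap (⊤ : SimpleGraph (Fin n))) v with hBdef
  have hcard : Fintype.card {x : Fin n // x ≠ v} = n - 1 := by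
    rw [Fintype.card_subtype_compl, Fintype.card_subtype_eq, Fintype.card_fin]
  have hB : ∀ i j : {x : Fin n // x ≠ v}, B i j = if i = j then ((n:ℝ)-1) else (-1) := by
    intro i j
    have h1 : 1 ≤ n := by omega
    by_cases hij : i = j
    · subst hij
      rw [if_pos rfl]
      simp [hBdef, del, lap, SimpleGraph.lapMatrix, SimpleGraph.degMatrix,
        Matrix.sub_apply, Nat.cast_sub h1]
      have hdeg : (((⊤ : SimpleGraph (Fin n)).degree (i:Fin n) : ℕ) : ℝ) = (n:ℝ) - 1 := by
        rw [SimpleGraph.complete_graph_degree, Fintype.card_fin, Nat.cast_sub h1, Nat.cast_one]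
      convert hdeg using 3
      rfl
    · have hvals : (i : Fin n) ≠ (j : Fin n) := fun hc => hij (Subtype.ext hc)
      rw [if_neg hij]
      simp [hBdef, del, lap, SimpleGraph.lapMatrix, SimpleGraph.degMatrix,
        Matrix.sub_apply, Matrix.diagonal_apply_ne _ hvals, hvals]
  have hBB : ∀ i j : {x : Fin n // x ≠ v},
      (Matrix.hadamard B B) i j = if i = j then ((n:ℝ)-1)*((n:ℝ)-1) else 1 := by
    intro i j
    rw [Matrix.hadamard_apply, hB i j]
    by_cases hij : i = j <;> simp [hij]
  rw [permanent_ite _ _ _ hB, permanent_ite _ _ _ hBB, hcard]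
  have hm1 : n - 1 + 1 = n := by omega
  rw [hm1]
  have key := scalar_ineq n hn
  have e1 : ∀ k ∈ range n,
      (((n-1).choose k * Nat.factorial (n-1-k) : ℕ) : ℝ) * (((n:ℝ)-1)*((n:ℝ)-1) - 1)^k * (1:ℝ)^(n-1-k)
        = ((n-1).descFactorial (n-1-k) : ℝ) * ((n:ℝ)^2 - 2*(n:ℝ))^k := by
    intro k hk
    have hk' : k ≤ n-1 := by simp only [Finset.mem_range] at hk; omega
    rw [coeffEq _ _ hk', one_pow, mul_one, show ((n:ℝ)-1)*((n:ℝ)-1) - 1 = (n:ℝ)^2 - 2*(n:ℝ) by ring]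
  have e2 : ∀ k ∈ range n,
      (((n-1).choose k * Nat.factorial (n-1-k) : ℕ) : ℝ) * (((n:ℝ)-1) - (-1))^k * (-1:ℝ)^(n-1-k)
        = ((n-1).descFactorial (n-1-k) : ℝ) * (n:ℝ)^k * (-1:ℝ)^(n-1-k) := by
    intro k hk
    have hk' : k ≤ n-1 := by simp only [Finset.mem_range] at hk; omega
    rw [coeffEq _ _ hk', show ((n:ℝ)-1) - (-1) = (n:ℝ) by ring]
  rw [Finset.sum_congr rfl e1, Finset.sum_congr rfl e2]
  exact key
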